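/- arXiv:2203.06615 — 2 statements merged into one kernel-verified Lean document; each statement's English description precedes it below -/
import Mathlib

section
/- Let g(H) := Σ_{i=1}^{d+1} η_i · max_{j ∈ P_i} ‖H δ_j‖², where the η_i > 0 sum to 1, {P_i} is a finite partition of an index set indexing vectors δ_j ∈ ℝ^d, and H ranges over d×d matrices. Let γ := inf_{H ≠ 0} Σ_{i=1}^{d+1} η_i min_{j ∈ P_i} ‖Hδ_j‖²/‖H‖_F². Then g is 2γ-strongly convex with respect to the Frobenius norm; i.e., for all matrices H₁, H₂ and α ∈ [0,1], g(αH₁ + (1−α)H₂) ≤ α g(H₁) + (1−α) g(H₂) − γ α(1−α) ‖H₁ − H₂‖_F². -/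
/-!
For every vector `δ`, the map `H ↦ ‖Hδ‖²` satisfies the exact identity
`‖(αH₁ + (1-α)H₂)δ‖² = α‖H₁δ‖² + (1-α)‖H₂δ‖² - α(1-α)‖(H₁-H₂)δ‖²`.
Taking the maximum over `j ∈ P_i` therefore loses at most `α(1-α) min_{j ∈ P_i} ‖(H₁-H₂)δ_j‖²`,
and after weighting by `η_i` and summing, this deficit is at least `γ ‖H₁-H₂‖_F²` by the very
definition of `γ` as an infimum over `H = H₁ - H₂`.
-/

open Matrix Finset

variable {ι κ m n : Type*} [Fintype ι] [Fintype m] [Fintype n]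

lemma sum_sq_convex_comb (x y : ι → ℝ) (α : ℝ) :
    ∑ k, (α * x k + (1 - α) * y k) ^ 2
      = α * ∑ k, x k ^ 2 + (1 - α) * ∑ k, y k ^ 2 - α * (1 - α) * ∑ k, (x k - y k) ^ 2 := by
  simp only [mul_sum, ← sum_add_distrib, ← sum_sub_distrib]
  exact sum_congr rfl fun _ _ => by ring

lemma sum_sq_mulVec_convex_comb (H₁ H₂ : Matrix m n ℝ) (v : n → ℝ) (α : ℝ) :
    ∑ k, ((α • H₁ + (1 - α) • H₂) *ᵥ v) k ^ 2
      = α * ∑ k, (H₁ *ᵥ v) k ^ 2 + (1 - α) * ∑ k, (H₂ *ᵥ v) k ^ 2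
        - α * (1 - α) * ∑ k, ((H₁ - H₂) *ᵥ v) k ^ 2 := by
  simpa [add_mulVec, smul_mulVec, sub_mulVec] using sum_sq_convex_comb (H₁ *ᵥ v) (H₂ *ᵥ v) α

lemma sum_sum_sq_pos {M : Matrix m n ℝ} (hM : M ≠ 0) : 0 < ∑ k, ∑ l, M k l ^ 2 := by
  obtain ⟨k, l, hkl⟩ : ∃ k l, M k l ≠ 0 := by
    by_contra! h
    exact hM (Matrix.ext h)
  exact sum_pos' (fun _ _ => sum_nonneg fun _ _ => sq_nonneg _)
    ⟨k, mem_univ k, sum_pos' (fun _ _ => sq_nonneg _) ⟨l, mem_univ l, by positivity⟩⟩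

namespace Finset

lemma inf'_div_const {s : Finset κ} (hs : s.Nonempty) (f : κ → ℝ) {c : ℝ} (hc : 0 ≤ c) :
    s.inf' hs (fun j => f j / c) = s.inf' hs f / c :=
  (apply_inf'_eq_inf'_comp hs (· / c) fun x y => (min_div_div_right hc x y).symm).symm

lemma sup'_le_add_sub_inf' {s : Finset κ} (hs : s.Nonempty) {f g h q : κ → ℝ} {a b c : ℝ}
    (ha : 0 ≤ a) (hb : 0 ≤ b) (hc : 0 ≤ c) (hf : ∀ j ∈ s, f j ≤ a * g j + b * h j - c * q j) :
    s.sup' hs f ≤ a * s.sup' hs g + b * s.sup' hs h - c * s.inf' hs q := by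
  refine sup'_le hs f fun j hj => (hf j hj).trans ?_
  have hg := mul_le_mul_of_nonneg_left (le_sup' g hj) ha
  have hh := mul_le_mul_of_nonneg_left (le_sup' h hj) hb
  have hq := mul_le_mul_of_nonneg_left (inf'_le q hj) hc
  linarith

end Finset

lemma iInf_mul_sum_sum_sq_le (η : ι → ℝ) (hη : ∀ i, 0 ≤ η i) (P : ι → Finset κ)
    (hne : ∀ i, (P i).Nonempty) (δ : κ → n → ℝ) (D : Matrix m n ℝ) :
    (⨅ H : {H : Matrix m n ℝ // H ≠ 0}, ∑ i, η i * (P i).inf' (hne i) fun j =>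
        (∑ k, (H.1 *ᵥ δ j) k ^ 2) / ∑ k, ∑ l, H.1 k l ^ 2) * ∑ k, ∑ l, D k l ^ 2
      ≤ ∑ i, η i * (P i).inf' (hne i) fun j => ∑ k, (D *ᵥ δ j) k ^ 2 := by
  rcases eq_or_ne D 0 with rfl | hD
  · simp
  have hF := sum_sum_sq_pos hD
  rw [← le_div_iff₀ hF, sum_div]
  refine (ciInf_le ⟨0, ?_⟩ ⟨D, hD⟩).trans_eq ?_
  · rintro _ ⟨H, rfl⟩
    exact sum_nonneg fun i _ => mul_nonneg (hη i) (le_inf' _ _ fun j _ => by positivity)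
  · exact sum_congr rfl fun i _ => by rw [inf'_div_const _ _ hF.le, mul_div_assoc]

theorem stmt7_general (d NN : ℕ) (δ : Fin NN → Fin d → ℝ)
    (η : Fin (d + 1) → ℝ) (hη : ∀ i, 0 < η i)
    (P : Fin (d + 1) → Finset (Fin NN)) (hne : ∀ i, (P i).Nonempty)
    (γ : ℝ)
    (hγ : γ = ⨅ H : {H : Matrix (Fin d) (Fin d) ℝ // H ≠ 0},
      ∑ i, η i * (P i).inf' (hne i) (fun j =>
        (∑ k, ((H : Matrix (Fin d) (Fin d) ℝ) *ᵥ δ j) k ^ 2)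
          / (∑ k, ∑ l, ((H : Matrix (Fin d) (Fin d) ℝ) k l) ^ 2)))
    (g : Matrix (Fin d) (Fin d) ℝ → ℝ)
    (hg : ∀ H, g H = ∑ i, η i * (P i).sup' (hne i) (fun j => ∑ k, (H *ᵥ δ j) k ^ 2)) :
    ∀ H1 H2 : Matrix (Fin d) (Fin d) ℝ, ∀ α : ℝ, 0 ≤ α → α ≤ 1 →
      g (α • H1 + (1 - α) • H2) ≤ α * g H1 + (1 - α) * g H2
        - γ * (α * (1 - α)) * (∑ k, ∑ l, (H1 k l - H2 k l) ^ 2) := by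
  intro H1 H2 α hα0 hα1
  have hβ0 : 0 ≤ 1 - α := by linarith
  have hc : 0 ≤ α * (1 - α) := mul_nonneg hα0 hβ0
  set sqNorm := fun (H : Matrix (Fin d) (Fin d) ℝ) j => ∑ k, (H *ᵥ δ j) k ^ 2
  have hrow : ∀ i, (P i).sup' (hne i) (sqNorm (α • H1 + (1 - α) • H2))
      ≤ α * (P i).sup' (hne i) (sqNorm H1) + (1 - α) * (P i).sup' (hne i) (sqNorm H2)
        - α * (1 - α) * (P i).inf' (hne i) (sqNorm (H1 - H2)) := fun i =>
    sup'_le_add_sub_inf' (hne i) hα0 hβ0 hc fun j _ =>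
      (sum_sq_mulVec_convex_comb H1 H2 (δ j) α).le
  have hγF : γ * ∑ k, ∑ l, (H1 k l - H2 k l) ^ 2
      ≤ ∑ i, η i * (P i).inf' (hne i) (sqNorm (H1 - H2)) :=
    hγ ▸ iInf_mul_sum_sum_sq_le η (fun i => (hη i).le) P hne δ (H1 - H2)
  simp only [hg]
  calc ∑ i, η i * (P i).sup' (hne i) (sqNorm (α • H1 + (1 - α) • H2))
      ≤ ∑ i, η i * (α * (P i).sup' (hne i) (sqNorm H1) + (1 - α) * (P i).sup' (hne i) (sqNorm H2)
          - α * (1 - α) * (P i).inf' (hne i) (sqNorm (H1 - H2))) :=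
        sum_le_sum fun i _ => mul_le_mul_of_nonneg_left (hrow i) (hη i).le
    _ = α * ∑ i, η i * (P i).sup' (hne i) (sqNorm H1)
          + (1 - α) * ∑ i, η i * (P i).sup' (hne i) (sqNorm H2)
          - α * (1 - α) * ∑ i, η i * (P i).inf' (hne i) (sqNorm (H1 - H2)) := by
        simp only [mul_sum, ← sum_add_distrib, ← sum_sub_distrib]
        exact sum_congr rfl fun _ _ => by ring
    _ ≤ _ := by linarith [mul_le_mul_of_nonneg_left hγF hc]

/-- The regularizer `g(H) = Σ_i η_i max_{j ∈ P_i} ‖Hδ_j‖²` is `2γ`-strongly convex w.r.t.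
the Frobenius norm, where `γ = inf_{H ≠ 0} Σ_i η_i min_{j ∈ P_i} ‖Hδ_j‖²/‖H‖_F²`. -/
theorem stmt7 (d NN : ℕ) (δ : Fin NN → Fin d → ℝ) (hδ : ∀ j, δ j ≠ 0)
    (η : Fin (d + 1) → ℝ) (hη : ∀ i, 0 < η i) (hsum : ∑ i, η i = 1)
    (P : Fin (d + 1) → Finset (Fin NN)) (hne : ∀ i, (P i).Nonempty)
    (hdisj : ∀ i i', i ≠ i' → Disjoint (P i) (P i'))
    (hcover : ∀ j, ∃ i, j ∈ P i)
    (γ : ℝ)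
    (hγ : γ = ⨅ H : {H : Matrix (Fin d) (Fin d) ℝ // H ≠ 0},
      ∑ i, η i * (P i).inf' (hne i) (fun j =>
        (∑ k, ((H : Matrix (Fin d) (Fin d) ℝ) *ᵥ δ j) k ^ 2)
          / (∑ k, ∑ l, ((H : Matrix (Fin d) (Fin d) ℝ) k l) ^ 2)))
    (g : Matrix (Fin d) (Fin d) ℝ → ℝ)
    (hg : ∀ H, g H = ∑ i, η i * (P i).sup' (hne i) (fun j => ∑ k, (H *ᵥ δ j) k ^ 2)) :
    ∀ H1 H2 : Matrix (Fin d) (Fin d) ℝ, ∀ α : ℝ, 0 ≤ α → α ≤ 1 →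
      g (α • H1 + (1 - α) • H2) ≤ α * g H1 + (1 - α) * g H2
        - γ * (α * (1 - α)) * (∑ k, ∑ l, (H1 k l - H2 k l) ^ 2) :=
  stmt7_general d NN δ η hη P hne γ hγ g hg
end

section
/- If ε > 0 and U is an ε-net of the unit sphere S^{d_y−1}, V an ε-net of S^{d_x−1}, and L an ε₀-net of [−r, r] with suitable radii, then the set of matrices Σᵢ σᵢ uᵢ vᵢ^T with σᵢ ∈ L, uᵢ ∈ U, vᵢ ∈ V forms a γ-cover in operator norm of the set of matrices H with all singular values at most r, with γ ≤ ε₀ + d_m · r · (2ε), where d_m = min{d_x, d_y}. More basically: if H = UΣV^T and H̃ = ŨΣ̃Ṽ^T are SVDs, then ‖H − H̃‖_op ≤ max_i |σ_i − σ̃_i| + d_m · (max_i σ̃_i) · max_i(‖u_i − ũ_i‖ + ‖v_i − ṽ_i‖). -/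
/-!
Write `H - H̃ = ∑ₖ (σₖ - σ̃ₖ) uₖvₖᵀ + ∑ₖ σ̃ₖ (uₖvₖᵀ - ũₖṽₖᵀ)`. Both factor families of the first
sum are orthonormal, so Pythagoras and Bessel's inequality bound its operator norm by
`maxₖ |σₖ - σ̃ₖ|`. Each term of the second sum is controlled by the single-rank estimate
`‖uvᵀ - ũṽᵀ‖ ≤ ‖u - ũ‖ + ‖v - ṽ‖` for unit vectors `ũ`, `v`, and the resulting sum
`∑ₖ σ̃ₖ (‖uₖ - ũₖ‖ + ‖vₖ - ṽₖ‖)` is at most `d_m` times the product of the two maxima.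
-/

open Matrix

/-- The (spectral) operator norm of a real matrix, via its action on Euclidean space. -/
noncomputable def opNorm {m n : ℕ} (A : Matrix (Fin m) (Fin n) ℝ) : ℝ :=
  ‖LinearMap.toContinuousLinearMap (Matrix.toEuclideanLin A)‖

open InnerProductSpace

section RankOne

variable {ι E F : Type*} [Fintype ι]
  [NormedAddCommGroup E] [InnerProductSpace ℝ E] [NormedAddCommGroup F] [InnerProductSpace ℝ F]

theorem norm_rankOne_sub_rankOne_le {u ut : F} {v vt : E} (hut : ‖ut‖ = 1) (hv : ‖v‖ = 1) :
    ‖rankOne ℝ u v - rankOne ℝ ut vt‖ ≤ ‖u - ut‖ + ‖v - vt‖ := by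
  have hsplit :
      rankOne ℝ u v - rankOne ℝ ut vt = rankOne ℝ (u - ut) v + rankOne ℝ ut (v - vt) := by
    simp only [map_sub, _root_.sub_apply]
    abel
  calc ‖rankOne ℝ u v - rankOne ℝ ut vt‖
      ≤ ‖rankOne ℝ (u - ut) v‖ + ‖rankOne ℝ ut (v - vt)‖ := hsplit ▸ norm_add_le _ _
    _ = ‖u - ut‖ + ‖v - vt‖ := by rw [norm_rankOne, norm_rankOne, hut, hv, mul_one, one_mul]

theorem norm_sum_smul_rankOne_le_of_orthonormal (c : ι → ℝ) {w : ι → F} {z : ι → E}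
    (hw : Orthonormal ℝ w) (hz : Orthonormal ℝ z) :
    ‖∑ k, c k • rankOne ℝ (w k) (z k)‖ ≤ ⨆ k, |c k| := by
  set C := ⨆ k, |c k|
  have hc : ∀ k, |c k| ≤ C := le_ciSup (Set.finite_range _).bddAbove
  have hC : 0 ≤ C := Real.iSup_nonneg fun k => abs_nonneg (c k)
  refine ContinuousLinearMap.opNorm_le_bound _ hC fun x => ?_
  have hpyth : ‖∑ k, (c k * inner ℝ (z k) x) • w k‖ ^ 2 = ∑ k, (c k * inner ℝ (z k) x) ^ 2 := by
    rw [← real_inner_self_eq_norm_sq, hw.inner_sum]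
    simp [sq]
  have hbessel : ∑ k, inner ℝ (z k) x ^ 2 ≤ ‖x‖ ^ 2 := by
    simpa only [Real.norm_eq_abs, sq_abs] using hz.sum_inner_products_le (s := Finset.univ) x
  have hsq : ‖∑ k, (c k * inner ℝ (z k) x) • w k‖ ^ 2 ≤ (C * ‖x‖) ^ 2 :=
    calc ‖∑ k, (c k * inner ℝ (z k) x) • w k‖ ^ 2
        = ∑ k, c k ^ 2 * inner ℝ (z k) x ^ 2 := by simp only [hpyth, mul_pow]
      _ ≤ ∑ k, C ^ 2 * inner ℝ (z k) x ^ 2 := by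
        refine Finset.sum_le_sum fun k _ => mul_le_mul_of_nonneg_right ?_ (sq_nonneg _)
        exact sq_le_sq' (neg_le_of_abs_le (hc k)) (le_of_abs_le (hc k))
      _ ≤ C ^ 2 * ‖x‖ ^ 2 := by rw [← Finset.mul_sum]; gcongr
      _ = (C * ‖x‖) ^ 2 := (mul_pow _ _ _).symm
  simpa [mul_smul] using (pow_le_pow_iff_left₀ (norm_nonneg _) (by positivity) two_ne_zero).1 hsq

theorem norm_sum_smul_rankOne_sub_le (σ σt : ι → ℝ) (hσt : ∀ k, 0 ≤ σt k) {u ut : ι → F}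
    {v vt : ι → E} (hu : Orthonormal ℝ u) (hv : Orthonormal ℝ v) (hut : ∀ k, ‖ut k‖ = 1) :
    ‖∑ k, σ k • rankOne ℝ (u k) (v k) - ∑ k, σt k • rankOne ℝ (ut k) (vt k)‖
      ≤ (⨆ k, |σ k - σt k|) + ∑ k, σt k * (‖u k - ut k‖ + ‖v k - vt k‖) := by
  have hsplit : ∑ k, σ k • rankOne ℝ (u k) (v k) - ∑ k, σt k • rankOne ℝ (ut k) (vt k)
      = ∑ k, (σ k - σt k) • rankOne ℝ (u k) (v k)
        + ∑ k, σt k • (rankOne ℝ (u k) (v k) - rankOne ℝ (ut k) (vt k)) := by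
    simp only [sub_smul, smul_sub, Finset.sum_sub_distrib]
    abel
  rw [hsplit]
  refine (norm_add_le _ _).trans (add_le_add (norm_sum_smul_rankOne_le_of_orthonormal _ hu hv) ?_)
  refine (norm_sum_le _ _).trans (Finset.sum_le_sum fun k _ => ?_)
  rw [norm_smul, Real.norm_of_nonneg (hσt k)]
  exact mul_le_mul_of_nonneg_left (norm_rankOne_sub_rankOne_le (hut k) (hv.1 k)) (hσt k)

end RankOne

theorem sum_mul_le_card_mul_iSup_mul_iSup {ι : Type*} [Fintype ι] {a b : ι → ℝ}
    (ha : ∀ k, 0 ≤ a k) (hb : ∀ k, 0 ≤ b k) :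
    ∑ k, a k * b k ≤ Fintype.card ι * (⨆ k, a k) * ⨆ k, b k := by
  have hA : ∀ k, a k ≤ ⨆ k, a k := le_ciSup (Set.finite_range _).bddAbove
  have hB : ∀ k, b k ≤ ⨆ k, b k := le_ciSup (Set.finite_range _).bddAbove
  calc ∑ k, a k * b k ≤ ∑ _k : ι, (⨆ k, a k) * ⨆ k, b k :=
        Finset.sum_le_sum fun k _ => mul_le_mul (hA k) (hB k) (hb k) (Real.iSup_nonneg ha)
    _ = Fintype.card ι * (⨆ k, a k) * ⨆ k, b k := by
        rw [Finset.sum_const, Finset.card_univ, nsmul_eq_mul, mul_assoc]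

theorem toContinuousLinearMap_toEuclideanLin_of_sum {ι m n : Type*} [Fintype ι] [Fintype m]
    [Fintype n] [DecidableEq n] (c : ι → ℝ) (w : ι → EuclideanSpace ℝ m)
    (z : ι → EuclideanSpace ℝ n) :
    LinearMap.toContinuousLinearMap (toEuclideanLin (of fun i j => ∑ k, c k * w k i * z k j))
      = ∑ k, c k • rankOne ℝ (w k) (z k) := by
  ext x i
  simp only [LinearMap.coe_toContinuousLinearMap', ofLp_toLpLin, toLin'_apply, _root_.sum_apply,
    _root_.smul_apply, rankOne_apply, WithLp.ofLp_sum, WithLp.ofLp_smul, Finset.sum_apply,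
    Pi.smul_apply, smul_eq_mul, mulVec, dotProduct, of_apply, PiLp.inner_apply,
    RCLike.inner_apply, conj_trivial, Finset.sum_mul, Finset.mul_sum]
  rw [Finset.sum_comm]
  exact Finset.sum_congr rfl fun k _ => Finset.sum_congr rfl fun j _ => by ring

theorem stmt18_general (dx dy dm : ℕ)
    (σ σt : Fin dm → ℝ) (hσt : ∀ k, 0 ≤ σt k)
    (u ut : Fin dm → EuclideanSpace ℝ (Fin dy))
    (v vt : Fin dm → EuclideanSpace ℝ (Fin dx))
    (hu : Orthonormal ℝ u) (hut : Orthonormal ℝ ut)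
    (hv : Orthonormal ℝ v)
    (H Ht : Matrix (Fin dy) (Fin dx) ℝ)
    (hH : H = Matrix.of fun i j => ∑ k, σ k * u k i * v k j)
    (hHt : Ht = Matrix.of fun i j => ∑ k, σt k * ut k i * vt k j) :
    opNorm (H - Ht)
      ≤ (⨆ k, |σ k - σt k|)
        + (dm : ℝ) * (⨆ k, σt k) * (⨆ k, (‖u k - ut k‖ + ‖v k - vt k‖)) := by
  have hdiff : LinearMap.toContinuousLinearMap (toEuclideanLin (H - Ht))
      = ∑ k, σ k • rankOne ℝ (u k) (v k) - ∑ k, σt k • rankOne ℝ (ut k) (vt k) := by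
    rw [map_sub, map_sub, hH, hHt, toContinuousLinearMap_toEuclideanLin_of_sum,
      toContinuousLinearMap_toEuclideanLin_of_sum]
  calc opNorm (H - Ht)
      ≤ (⨆ k, |σ k - σt k|) + ∑ k, σt k * (‖u k - ut k‖ + ‖v k - vt k‖) := by
        rw [opNorm, hdiff]
        exact norm_sum_smul_rankOne_sub_le σ σt hσt hu hv fun k => hut.1 k
    _ ≤ _ := by
        grw [sum_mul_le_card_mul_iSup_mul_iSup (b := fun k => ‖u k - ut k‖ + ‖v k - vt k‖) hσt
          fun k => by positivity, Fintype.card_fin]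

/-- SVD perturbation bound: if `H = Σ σᵢ uᵢvᵢᵀ` and `H̃ = Σ σ̃ᵢ ũᵢṽᵢᵀ` with orthonormal
singular-vector families, then
`‖H − H̃‖_op ≤ maxᵢ|σᵢ − σ̃ᵢ| + d_m·(maxᵢ σ̃ᵢ)·maxᵢ(‖uᵢ − ũᵢ‖ + ‖vᵢ − ṽᵢ‖)`. -/
theorem stmt18 (dx dy dm : ℕ) [NeZero dm] (hdm : dm = min dx dy)
    (σ σt : Fin dm → ℝ) (hσ : ∀ k, 0 ≤ σ k) (hσt : ∀ k, 0 ≤ σt k)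
    (u ut : Fin dm → EuclideanSpace ℝ (Fin dy))
    (v vt : Fin dm → EuclideanSpace ℝ (Fin dx))
    (hu : Orthonormal ℝ u) (hut : Orthonormal ℝ ut)
    (hv : Orthonormal ℝ v) (hvt : Orthonormal ℝ vt)
    (H Ht : Matrix (Fin dy) (Fin dx) ℝ)
    (hH : H = Matrix.of fun i j => ∑ k, σ k * u k i * v k j)
    (hHt : Ht = Matrix.of fun i j => ∑ k, σt k * ut k i * vt k j) :
    opNorm (H - Ht)
      ≤ (⨆ k, |σ k - σt k|)
        + (dm : ℝ) * (⨆ k, σt k) * (⨆ k, (‖u k - ut k‖ + ‖v k - vt k‖)) :=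
  stmt18_general dx dy dm σ σt hσt u ut v vt hu hut hv H Ht hH hHt
end
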